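/- arXiv:2308.16163 — 8 statements merged into one kernel-verified Lean document; each statement's English description precedes it below -/
import Mathlib

section
/- If G is a nonempty α-maximal graph on n vertices with e(G) = C·n^{1+α} edges for some 0 < α < 1, then C ≥ 1/4. -/
/-- `G` is `α`-maximal: every subgraph `H` of `G` satisfies
`e(H)/v(H)^{1+α} ≤ e(G)/v(G)^{1+α}` (stated in cross-multiplied form). -/
def IsAlphaMaximal {V : Type*} [Fintype V] (G : SimpleGraph V) (α : ℝ) : Prop :=
  ∀ H : G.Subgraph,
    (H.edgeSet.ncard : ℝ) * (Fintype.card V : ℝ) ^ (1 + α) ≤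
      (G.edgeSet.ncard : ℝ) * (H.verts.ncard : ℝ) ^ (1 + α)

theorem stmt_0 {V : Type*} [Fintype V] (G : SimpleGraph V) (α C : ℝ)
    (hα0 : 0 < α) (hα1 : α < 1)
    (hmax : IsAlphaMaximal G α)
    (hne : G.edgeSet.Nonempty)
    (hC : (G.edgeSet.ncard : ℝ) = C * (Fintype.card V : ℝ) ^ (1 + α)) :
    1 / 4 ≤ C := by
  obtain ⟨e, he⟩ := hne
  induction e using Sym2.ind with
  | _ u v =>
    rw [SimpleGraph.mem_edgeSet] at he
    have hH := hmax (G.subgraphOfAdj he)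
    have hverts : (G.subgraphOfAdj he).verts.ncard = 2 := by
      simp only [SimpleGraph.subgraphOfAdj_verts]
      rw [Set.ncard_insert_of_notMem (by simp [he.ne]), Set.ncard_singleton]
    have hedge : (G.subgraphOfAdj he).edgeSet.ncard = 1 := by
      have : (G.subgraphOfAdj he).edgeSet = {s(u, v)} := by
        ext e; induction e using Sym2.ind with
        | _ x y => simp [he.ne]
      rw [this, Set.ncard_singleton]
    rw [hverts, hedge] at hH
    have hn : (2 : ℝ) ≤ (Fintype.card V : ℝ) := by
      have : 2 ≤ Fintype.card V := by
        have := Fintype.card_pos_iff.mpr ⟨u⟩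
        exact Fintype.one_lt_card_iff_nontrivial.mpr ⟨u, v, he.ne⟩
      exact_mod_cast this
    have hnpos : (0 : ℝ) < (Fintype.card V : ℝ) := by linarith
    have hnp : (0 : ℝ) < (Fintype.card V : ℝ) ^ (1 + α) :=
      Real.rpow_pos_of_pos hnpos _
    -- from hH : 1 * n^(1+α) ≤ e(G) * 2^(1+α)
    rw [hC] at hH
    push_cast at hH
    have h2 : (2 : ℝ) ^ (1 + α) ≤ 4 := by
      have : (2 : ℝ) ^ (1 + α) ≤ (2 : ℝ) ^ (2 : ℝ) :=
        Real.rpow_le_rpow_of_exponent_le (by norm_num) (by linarith)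
      calc (2 : ℝ) ^ (1 + α) ≤ (2 : ℝ) ^ (2 : ℝ) := this
        _ = 4 := by
            rw [show (2:ℝ) = ((2:ℕ):ℝ) by norm_num, Real.rpow_natCast]; norm_num
    have h2pos : (0 : ℝ) < (2 : ℝ) ^ (1 + α) := Real.rpow_pos_of_pos (by norm_num) _
    have hCpos : 0 ≤ C := by
      by_contra h
      push_neg at h
      nlinarith [hH, hnp, h2pos]
    have key := le_trans hH (mul_le_mul_of_nonneg_left h2 (mul_nonneg hCpos hnp.le))
    nlinarith [key, hnp]
end

section
/- Let 0 < α < 1 and let G be an α-maximal graph on n vertices with e(G) = C·n^{1+α}. Then for every vertex subset S with |S| ≤ n/2, the number of edges between S and its complement satisfies e(S, V(G)\S) ≥ |S|·αC·n^α/4. -/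
private lemma edge_split {V : Type*} [Fintype V] (G : SimpleGraph V) (S : Set V) :
    G.edgeSet.ncard ≤ (((⊤ : G.Subgraph).induce S).edgeSet).ncard
      + (((⊤ : G.Subgraph).induce Sᶜ).edgeSet).ncard
      + ({p : V × V | p.1 ∈ S ∧ p.2 ∉ S ∧ G.Adj p.1 p.2}).ncard := by
  classical
  set A := ((⊤ : G.Subgraph).induce S).edgeSet with hA
  set B := ((⊤ : G.Subgraph).induce Sᶜ).edgeSet with hB
  set P := {p : V × V | p.1 ∈ S ∧ p.2 ∉ S ∧ G.Adj p.1 p.2} with hP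
  set E3 := (fun p : V × V => s(p.1, p.2)) '' P with hE3
  have hsub : G.edgeSet ⊆ A ∪ B ∪ E3 := by
    intro e he
    induction e using Sym2.ind with
    | _ a b =>
      rw [SimpleGraph.mem_edgeSet] at he
      by_cases haS : a ∈ S <;> by_cases hbS : b ∈ S
      · exact Or.inl (Or.inl (by
          rw [hA, SimpleGraph.Subgraph.mem_edgeSet, SimpleGraph.Subgraph.induce_adj]
          exact ⟨haS, hbS, by simpa using he⟩))
      · exact Or.inr ⟨(a, b), ⟨haS, hbS, he⟩, rfl⟩
      · exact Or.inr ⟨(b, a), ⟨hbS, haS, he.symm⟩, Sym2.eq_swap⟩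
      · exact Or.inl (Or.inr (by
          rw [hB, SimpleGraph.Subgraph.mem_edgeSet, SimpleGraph.Subgraph.induce_adj]
          exact ⟨haS, hbS, by simpa using he⟩))
  calc G.edgeSet.ncard ≤ (A ∪ B ∪ E3).ncard := Set.ncard_le_ncard hsub (Set.toFinite _)
    _ ≤ (A ∪ B).ncard + E3.ncard := Set.ncard_union_le _ _
    _ ≤ (A.ncard + B.ncard) + E3.ncard := by
        exact Nat.add_le_add_right (Set.ncard_union_le _ _) _
    _ ≤ A.ncard + B.ncard + P.ncard := by
        exact Nat.add_le_add_left (Set.ncard_image_le (Set.toFinite _)) _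

theorem stmt_1 {V : Type*} [Fintype V] (G : SimpleGraph V) (α C : ℝ)
    (hα0 : 0 < α) (hα1 : α < 1)
    (hmax : IsAlphaMaximal G α)
    (hC : (G.edgeSet.ncard : ℝ) = C * (Fintype.card V : ℝ) ^ (1 + α))
    (S : Set V) (hS : (S.ncard : ℝ) ≤ (Fintype.card V : ℝ) / 2) :
    (S.ncard : ℝ) * (α * C * (Fintype.card V : ℝ) ^ α / 4) ≤
      ({p : V × V | p.1 ∈ S ∧ p.2 ∉ S ∧ G.Adj p.1 p.2}.ncard : ℝ) := by
  classical
  by_cases hs0 : S.ncard = 0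
  · rw [hs0]; simpa using Nat.cast_nonneg _
  set n : ℝ := (Fintype.card V : ℝ) with hn
  set s : ℝ := (S.ncard : ℝ) with hs
  have hs1 : (1 : ℝ) ≤ s := by
    rw [hs]; exact_mod_cast Nat.one_le_iff_ne_zero.mpr hs0
  have hn2 : (2 : ℝ) ≤ n := by linarith
  have hn0 : (0 : ℝ) < n := by linarith
  have hp : (0 : ℝ) < n ^ (1 + α) := Real.rpow_pos_of_pos hn0 _
  have hC0 : 0 ≤ C := by
    have h0 : (0 : ℝ) ≤ (G.edgeSet.ncard : ℝ) := Nat.cast_nonneg _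
    nlinarith
  -- complement cardinality
  have hsc : ((Sᶜ : Set V).ncard : ℝ) = n - s := by
    have h : S.ncard + (Sᶜ : Set V).ncard = Fintype.card V := by
      simpa [Nat.card_eq_fintype_card] using Set.ncard_add_ncard_compl S
    have : (S.ncard : ℝ) + ((Sᶜ : Set V).ncard : ℝ) = n := by rw [hn]; exact_mod_cast h
    linarith
  set u : ℝ := n - s with hu
  have hu0 : (0 : ℝ) < u := by rw [hu]; linarith
  have hsu : s ≤ u := by rw [hu]; linarith
  have hun2 : n / 2 ≤ u := by rw [hu]; linarith
  -- subgraph bounds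
  have key1 : ((((⊤ : G.Subgraph).induce S).edgeSet).ncard : ℝ) ≤ C * s ^ (1 + α) := by
    have h := hmax ((⊤ : G.Subgraph).induce S)
    rw [SimpleGraph.Subgraph.induce_verts, hC] at h
    have := le_div_iff₀ hp |>.mpr h
    calc ((((⊤ : G.Subgraph).induce S).edgeSet).ncard : ℝ)
        ≤ C * n ^ (1 + α) * s ^ (1 + α) / n ^ (1 + α) := this
      _ = C * s ^ (1 + α) := by field_simp
  have key2 : ((((⊤ : G.Subgraph).induce Sᶜ).edgeSet).ncard : ℝ) ≤ C * u ^ (1 + α) := by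
    have h := hmax ((⊤ : G.Subgraph).induce Sᶜ)
    rw [SimpleGraph.Subgraph.induce_verts, hC, hsc] at h
    have := le_div_iff₀ hp |>.mpr h
    calc ((((⊤ : G.Subgraph).induce Sᶜ).edgeSet).ncard : ℝ)
        ≤ C * n ^ (1 + α) * (n - s) ^ (1 + α) / n ^ (1 + α) := this
      _ = C * u ^ (1 + α) := by rw [hu]; field_simp
  -- edge split
  have hsplit : (G.edgeSet.ncard : ℝ) ≤ ((((⊤ : G.Subgraph).induce S).edgeSet).ncard : ℝ)
      + ((((⊤ : G.Subgraph).induce Sᶜ).edgeSet).ncard : ℝ)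
      + (({p : V × V | p.1 ∈ S ∧ p.2 ∉ S ∧ G.Adj p.1 p.2}).ncard : ℝ) := by
    exact_mod_cast edge_split G S
  -- Bernoulli: n^(1+α) ≥ u^(1+α) + (1+α) * u^α * s
  have hbern : u ^ (1 + α) + (1 + α) * u ^ α * s ≤ n ^ (1 + α) := by
    have h1 : (1 : ℝ) + (1 + α) * (s / u) ≤ (1 + s / u) ^ (1 + α) :=
      one_add_mul_self_le_rpow_one_add
        (by have := div_nonneg (by linarith : (0:ℝ) ≤ s) hu0.le; linarith) (by linarith)
    have h2 : u ^ (1 + α) * ((1 : ℝ) + (1 + α) * (s / u)) ≤ u ^ (1 + α) * (1 + s / u) ^ (1 + α) :=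
      mul_le_mul_of_nonneg_left h1 (by positivity)
    have h3 : u ^ (1 + α) * (1 + s / u) ^ (1 + α) = n ^ (1 + α) := by
      rw [← Real.mul_rpow (le_of_lt hu0) (by positivity)]
      congr 1
      field_simp
      linarith
    have h4 : u ^ (1 + α) * ((1 : ℝ) + (1 + α) * (s / u))
        = u ^ (1 + α) + (1 + α) * (u ^ (1 + α) / u) * s := by
      field_simp
    have h5 : u ^ (1 + α) / u = u ^ α := by
      rw [Real.rpow_add hu0, Real.rpow_one]; field_simp
    rw [h4, h5] at h2
    linarith [h2, h3.le, h3.ge]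
  -- s^(1+α) ≤ s * u^α
  have hspow : s ^ (1 + α) ≤ s * u ^ α := by
    have : s ^ (1 + α) = s * s ^ α := by
      rw [Real.rpow_add (by linarith : (0:ℝ) < s), Real.rpow_one]
    rw [this]
    have : s ^ α ≤ u ^ α := Real.rpow_le_rpow (by linarith) hsu (le_of_lt hα0)
    nlinarith
  -- u^α ≥ n^α / 2
  have hua : n ^ α / 2 ≤ u ^ α := by
    have h1 : (n / 2) ^ α ≤ u ^ α := Real.rpow_le_rpow (by positivity) hun2 (le_of_lt hα0)
    have h2 : (n / 2 : ℝ) ^ α = n ^ α / 2 ^ α := Real.div_rpow (le_of_lt hn0) (by norm_num : (0:ℝ) ≤ 2) α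
    have h3 : (2 : ℝ) ^ α ≤ 2 := by
      calc (2 : ℝ) ^ α ≤ (2 : ℝ) ^ (1 : ℝ) :=
            Real.rpow_le_rpow_of_exponent_le (by norm_num) (le_of_lt hα1)
        _ = 2 := Real.rpow_one 2
    have h4 : n ^ α / 2 ≤ n ^ α / 2 ^ α := by
      apply div_le_div_of_nonneg_left (by positivity) (by positivity) h3
    linarith [h2 ▸ h1]
  -- combine
  have hna : (0 : ℝ) ≤ n ^ α := by positivity
  have hcross : C * (n ^ (1 + α) - s ^ (1 + α) - u ^ (1 + α))
      ≤ (({p : V × V | p.1 ∈ S ∧ p.2 ∉ S ∧ G.Adj p.1 p.2}).ncard : ℝ) := by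
    have h := hsplit
    rw [hC] at h
    linarith [key1, key2]
  have hfinal : s * (α * C * n ^ α / 4) ≤ C * (n ^ (1 + α) - s ^ (1 + α) - u ^ (1 + α)) := by
    have h1 : α * s * (n ^ α / 2) ≤ n ^ (1 + α) - s ^ (1 + α) - u ^ (1 + α) := by
      have ha : α * s * (n ^ α / 2) ≤ α * s * u ^ α :=
        mul_le_mul_of_nonneg_left hua (by positivity)
      nlinarith [hbern, hspow]
    have h3 : C * (α * s * (n ^ α / 2)) ≤ C * (n ^ (1 + α) - s ^ (1 + α) - u ^ (1 + α)) :=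
      mul_le_mul_of_nonneg_left h1 hC0
    have hm : (0:ℝ) ≤ C * α * s * n ^ α := by positivity
    linarith [h3, hm]
  exact le_trans hfinal hcross
end

section
/- For real numbers α with 0 < α < 1 and positive reals a ≤ b, one has (a+b)^{1+α} − a^{1+α} − b^{1+α} ≥ α·a·b^α. -/
theorem stmt_3 (α a b : ℝ) (hα0 : 0 < α) (hα1 : α < 1) (ha : 0 < a) (hab : a ≤ b) :
    α * a * b ^ α ≤ (a + b) ^ (1 + α) - a ^ (1 + α) - b ^ (1 + α) := by
  have hb : 0 < b := lt_of_lt_of_le ha hab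
  have h1 : a ^ (1 + α) ≤ a * b ^ α := by
    rw [Real.rpow_add ha, Real.rpow_one]
    exact mul_le_mul_of_nonneg_left
      (Real.rpow_le_rpow ha.le hab hα0.le) ha.le
  have h2 : b ^ (1 + α) + (1 + α) * (a * b ^ α) ≤ (a + b) ^ (1 + α) := by
    have key := one_add_mul_self_le_rpow_one_add
      (s := a / b) (by linarith [div_pos ha hb]) (p := 1 + α) (by linarith)
    have hmul := mul_le_mul_of_nonneg_left key (Real.rpow_nonneg hb.le (1 + α))
    have hab' : (1 + a / b) = (a + b) / b := by field_simp; ring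
    rw [hab', Real.div_rpow (by positivity) hb.le] at hmul
    rw [mul_div_cancel₀ _ (by positivity : b ^ (1 + α) ≠ 0)] at hmul
    calc b ^ (1 + α) + (1 + α) * (a * b ^ α)
        = b ^ (1 + α) * (1 + (1 + α) * (a / b)) := by
          rw [Real.rpow_add hb, Real.rpow_one]; field_simp
      _ ≤ (a + b) ^ (1 + α) := hmul
  nlinarith [h1, h2]
end

section
/- A bipartite graph with parts of size m and n containing no cycle of length four has at most m·√n + n edges. -/
/-- Kővári–Sós–Turán: a `C₄`-free bipartite graph (given as a relation `r` between the
two parts, of sizes `m` and `n`) has at most `m·√n + n` edges. -/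
theorem stmt_4 (m n : ℕ) (r : Fin m → Fin n → Prop)
    [DecidablePred fun p : Fin m × Fin n => r p.1 p.2]
    (hC4 : ∀ (x x' : Fin m) (y y' : Fin n), x ≠ x' → y ≠ y' →
      ¬(r x y ∧ r x y' ∧ r x' y ∧ r x' y')) :
    ((Finset.univ.filter fun p : Fin m × Fin n => r p.1 p.2).card : ℝ) ≤
      m * Real.sqrt n + n := by
  classical
  set d : Fin n → ℕ := fun y => (Finset.univ.filter fun x => r x y).card with hd
  have hcard : (Finset.univ.filter fun p : Fin m × Fin n => r p.1 p.2).card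
      = ∑ y, d y := by
    rw [Finset.card_filter, Fintype.sum_prod_type, Finset.sum_comm]
    refine Finset.sum_congr rfl fun y _ => ?_
    simp only [hd, Finset.card_filter]
    exact Finset.sum_congr rfl fun i _ => by congr
  -- the sigma finset of triples (y, (x, x')) with x ≠ x' both adjacent to y
  set T : Finset ((_ : Fin n) × (Fin m × Fin m)) :=
    (Finset.univ : Finset (Fin n)).sigma fun y =>
      ((Finset.univ.filter fun x => r x y)).offDiag with hT
  have hinj : Set.InjOn (fun z : (_ : Fin n) × (Fin m × Fin m) => z.2) T := by
    rintro ⟨y, x, x'⟩ hz ⟨y', x₁, x₁'⟩ hz' heq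
    simp only [hT, Finset.coe_sigma, Set.mem_sigma_iff, Finset.mem_coe,
      Finset.mem_offDiag, Finset.mem_filter, Finset.mem_univ, true_and] at hz hz'
    obtain ⟨hxy, hx'y, hxx⟩ := hz
    obtain ⟨hx₁y, hx₁'y, hxx₁⟩ := hz'
    simp only at heq
    obtain ⟨h1, h2⟩ := Prod.ext_iff.mp heq
    simp only at h1 h2
    subst h1; subst h2
    have hy : y = y' := by
      by_contra hy
      exact hC4 x x' y y' hxx hy ⟨hxy, hx₁y, hx'y, hx₁'y⟩
    subst hy; rfl
  have hcount : ∑ y, (d y * d y - d y) ≤ m * m := by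
    have h := Finset.card_le_card_of_injOn _ (fun _ _ => Finset.mem_univ _) hinj
    simpa [hT, Finset.card_sigma, Finset.offDiag_card, hd, Finset.card_univ]
      using h
  have hsq : ∑ y, d y * d y ≤ m * m + ∑ y, d y := by
    calc ∑ y, d y * d y = ∑ y, ((d y * d y - d y) + d y) :=
          Finset.sum_congr rfl fun y _ => by
            rcases Nat.eq_zero_or_pos (d y) with h | h
            · simp [h]
            · have h2 : d y ≤ d y * d y := Nat.le_mul_of_pos_left _ h
              omega
      _ = (∑ y, (d y * d y - d y)) + ∑ y, d y := Finset.sum_add_distrib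
      _ ≤ m * m + ∑ y, d y := Nat.add_le_add_right hcount _
  -- Cauchy–Schwarz
  set e : ℝ := ∑ y, (d y : ℝ) with he
  have he0 : 0 ≤ e := Finset.sum_nonneg fun y _ => by positivity
  have hcs : e ^ 2 ≤ n * ∑ y, (d y : ℝ) ^ 2 := by
    have := sq_sum_le_card_mul_sum_sq (s := (Finset.univ : Finset (Fin n)))
      (f := fun y => (d y : ℝ))
    simpa [Finset.card_univ] using this
  have hsum : ∑ y, (d y : ℝ) ^ 2 ≤ (m : ℝ) * m + e := by
    have : ((∑ y, d y * d y : ℕ) : ℝ) ≤ ((m * m + ∑ y, d y : ℕ) : ℝ) := by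
      exact_mod_cast hsq
    push_cast at this
    simpa [sq] using this
  set s : ℝ := Real.sqrt n with hs
  have hs0 : 0 ≤ s := Real.sqrt_nonneg _
  have hs2 : s ^ 2 = n := Real.sq_sqrt (Nat.cast_nonneg n)
  have hm0 : (0:ℝ) ≤ m := Nat.cast_nonneg m
  rw [hcard]
  push_cast
  show e ≤ m * s + n
  have key : e ^ 2 ≤ s ^ 2 * ((m:ℝ) * m) + s ^ 2 * e := by
    rw [hs2]
    calc e ^ 2 ≤ n * ∑ y, (d y : ℝ) ^ 2 := hcs
      _ ≤ n * ((m : ℝ) * m + e) := by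
          exact mul_le_mul_of_nonneg_left hsum (Nat.cast_nonneg n)
      _ = (n:ℝ) * ((m:ℝ)*m) + n * e := by ring
  rw [← hs2]
  nlinarith [mul_nonneg hm0 hs0, mul_nonneg (mul_nonneg hm0 hs0) (mul_nonneg hs0 hs0),
    mul_nonneg he0 hm0, mul_nonneg he0 hs0, sq_nonneg (e - m*s - s^2), sq_nonneg (e + m*s)]
end

section
/- Let G be a bipartite graph with parts X, Y and let Γ be its C4-graph. If x_1, ..., x_ℓ is a cycle of odd length ℓ in Γ such that the corresponding edges φ(x_1), ..., φ(x_ℓ) of G are pairwise vertex-disjoint, then G contains a copy of C^dia_{2ℓ}, the cycle of length 2ℓ with all diagonals. -/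
/-- The cycle of length `2ℓ` with all diagonals: vertices `ZMod (2ℓ)`, with cycle edges
`i ~ i+1` and diagonals `i ~ i+ℓ`. -/
def cdia (ℓ : ℕ) : SimpleGraph (ZMod (2 * ℓ)) :=
  SimpleGraph.fromRel (fun i j => j = i + 1 ∨ j = i + (ℓ : ZMod (2 * ℓ)))

/-- The bipartite graph on `X ⊕ Y` determined by a relation `r : X → Y → Prop`. -/
def bip {X Y : Type*} (r : X → Y → Prop) : SimpleGraph (X ⊕ Y) :=
  SimpleGraph.fromRel (fun a b => ∃ x y, a = Sum.inl x ∧ b = Sum.inr y ∧ r x y)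

/-- If the C₄-graph of a bipartite graph `G` (given by the relation `r`) has a proper odd
cycle `c 0, c 1, …, c (ℓ-1)` (vertices of the C₄-graph are edges of `G`, consecutive ones
form four-cycles of `G`, and the corresponding edges of `G` are pairwise disjoint),
then `G` contains a copy of `C^dia_{2ℓ}`. -/
theorem stmt_7 {X Y : Type*} (r : X → Y → Prop) (ℓ : ℕ) (hodd : Odd ℓ) (hℓ : 3 ≤ ℓ)
    (c : ZMod ℓ → X × Y)
    (hvert : ∀ i, r (c i).1 (c i).2)
    (hcyc : ∀ i : ZMod ℓ, r (c i).1 (c (i + 1)).2 ∧ r (c (i + 1)).1 (c i).2)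
    (hproper : ∀ i j : ZMod ℓ, i ≠ j → (c i).1 ≠ (c j).1 ∧ (c i).2 ≠ (c j).2) :
    ∃ f : ZMod (2 * ℓ) → X ⊕ Y, Function.Injective f ∧
      ∀ i j, (cdia ℓ).Adj i j → (bip r).Adj (f i) (f j) := by
  haveI : NeZero ℓ := ⟨by omega⟩
  haveI : NeZero (2 * ℓ) := ⟨by omega⟩
  classical
  set p : ZMod (2 * ℓ) →+* ZMod 2 := ZMod.castHom (dvd_mul_right 2 ℓ) (ZMod 2) with hp
  set g : ZMod (2 * ℓ) →+* ZMod ℓ := ZMod.castHom (dvd_mul_left ℓ 2) (ZMod ℓ) with hg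
  set f : ZMod (2 * ℓ) → X ⊕ Y :=
    fun t => if p t = 0 then Sum.inl (c (g t)).1 else Sum.inr (c (g t)).2 with hf
  -- parity facts
  have hpl : p ((ℓ : ZMod (2 * ℓ))) = 1 := by
    rw [map_natCast, ← ZMod.natCast_mod, Nat.odd_iff.mp hodd, Nat.cast_one]
  have hgl : g ((ℓ : ZMod (2 * ℓ))) = 0 := by
    rw [map_natCast, ZMod.natCast_self]
  have two01 : ∀ a : ZMod 2, a = 0 ∨ a = 1 := by decide
  have bipAdj : ∀ x y, r x y → (bip r).Adj (Sum.inl x) (Sum.inr y) := by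
    intro x y h
    simp only [bip, SimpleGraph.fromRel_adj]
    exact ⟨by simp, Or.inl ⟨x, y, rfl, rfl, h⟩⟩
  -- the two basic adjacencies
  have hsucc : ∀ i, (bip r).Adj (f i) (f (i + 1)) := by
    intro i
    rcases two01 (p i) with h0 | h1
    · have h1' : p (i + 1) ≠ 0 := by rw [map_add, map_one, h0]; decide
      simp only [hf, h0, if_pos rfl, if_neg h1', map_add, map_one]
      exact bipAdj _ _ (hcyc (g i)).1
    · have h0' : p (i + 1) = 0 := by rw [map_add, map_one, h1]; decide
      have h1'' : p i ≠ 0 := by rw [h1]; decide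
      simp only [hf, if_neg h1'', if_pos h0', map_add, map_one]
      exact (bipAdj _ _ (hcyc (g i)).2).symm
  have hdiag : ∀ i, (bip r).Adj (f i) (f (i + (ℓ : ZMod (2 * ℓ)))) := by
    intro i
    have hgeq : g (i + (ℓ : ZMod (2 * ℓ))) = g i := by rw [map_add, hgl, add_zero]
    rcases two01 (p i) with h0 | h1
    · have h1' : p (i + (ℓ : ZMod (2 * ℓ))) ≠ 0 := by
        rw [map_add, hpl, h0]; decide
      simp only [hf, if_pos h0, if_neg h1', hgeq]
      exact bipAdj _ _ (hvert (g i))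
    · have h0' : p (i + (ℓ : ZMod (2 * ℓ))) = 0 := by
        rw [map_add, hpl, h1]; decide
      have h1'' : p i ≠ 0 := by rw [h1]; decide
      simp only [hf, if_neg h1'', if_pos h0', hgeq]
      exact (bipAdj _ _ (hvert (g i))).symm
  refine ⟨f, ?_, ?_⟩
  · -- injectivity
    intro s t h
    have hgeq : g s = g t := by
      by_contra hne
      rcases two01 (p s) with hs | hs <;> rcases two01 (p t) with ht | ht
      · have hs' : p s = 0 := hs
        simp only [hf, if_pos hs, if_pos ht] at h
        exact (hproper (g s) (g t) hne).1 (Sum.inl.inj h)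
      · have : p t ≠ 0 := by rw [ht]; decide
        simp only [hf, if_pos hs, if_neg this] at h
        exact absurd h (by simp)
      · have : p s ≠ 0 := by rw [hs]; decide
        simp only [hf, if_neg this, if_pos ht] at h
        exact absurd h (by simp)
      · have hs' : p s ≠ 0 := by rw [hs]; decide
        have ht' : p t ≠ 0 := by rw [ht]; decide
        simp only [hf, if_neg hs', if_neg ht'] at h
        exact (hproper (g s) (g t) hne).2 (Sum.inr.inj h)
    have hpeq : p s = p t := by
      by_contra hne
      rcases two01 (p s) with hs | hs <;> rcases two01 (p t) with ht | ht
      · exact hne (hs.trans ht.symm)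
      · have ht' : p t ≠ 0 := by rw [ht]; decide
        simp only [hf, if_pos hs, if_neg ht'] at h
        exact absurd h (by simp)
      · have hs' : p s ≠ 0 := by rw [hs]; decide
        simp only [hf, if_neg hs', if_pos ht] at h
        exact absurd h (by simp)
      · exact hne (hs.trans ht.symm)
    -- CRT: same residue mod 2 and mod ℓ implies equal
    set u : ZMod (2 * ℓ) := s - t with hu
    have hp0 : p u = 0 := by rw [hu, map_sub, hpeq, sub_self]
    have hg0 : g u = 0 := by rw [hu, map_sub, hgeq, sub_self]
    have h2 : (2 : ℕ) ∣ u.val := by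
      rw [← ZMod.natCast_eq_zero_iff]
      rw [hp, ZMod.castHom_apply, ← ZMod.natCast_val] at hp0
      exact hp0
    have hl : ℓ ∣ u.val := by
      rw [← ZMod.natCast_eq_zero_iff]
      rw [hg, ZMod.castHom_apply, ← ZMod.natCast_val] at hg0
      exact hg0
    have hco : Nat.Coprime 2 ℓ := Nat.coprime_two_left.mpr hodd
    have hdvd : 2 * ℓ ∣ u.val := Nat.Coprime.mul_dvd_of_dvd_of_dvd hco h2 hl
    have hu0 : u = 0 := by
      rcases Nat.eq_zero_of_dvd_of_lt hdvd (ZMod.val_lt u) with h'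
      exact (ZMod.val_eq_zero u).mp h'
    exact sub_eq_zero.mp (hu.symm ▸ hu0 : s - t = 0)
  · -- adjacency
    intro i j hij
    simp only [cdia, SimpleGraph.fromRel_adj] at hij
    obtain ⟨-, (h | h) | (h | h)⟩ := hij
    · rw [h]; exact hsucc i
    · rw [h]; exact hdiag i
    · rw [h]; exact (hsucc j).symm
    · rw [h]; exact (hdiag j).symm
end

section
/- Let G be a bipartite graph and suppose the edge uv ∈ E(G) is contained in at least 50·C·D·n^{1/2} four-cycles uvxy for which max{d_G(u,x), d_G(v,y)} ≥ 10·√(CD)·n^{1/4}, where Δ(G) ≤ C·D·n^{1/2}. Then G contains a copy of K_{3,3}. -/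
/-- The codegree of two vertices: the number of common neighbors. -/
noncomputable def codeg {V : Type*} (G : SimpleGraph V) (a b : V) : ℝ :=
  ({w | G.Adj a w ∧ G.Adj b w}.ncard : ℝ)

lemma build_k33 {V : Type*} (G : SimpleGraph V) (u v x1 x2 y1 y2 : V)
    (huv : G.Adj u v) (hvx1 : G.Adj v x1) (hvx2 : G.Adj v x2)
    (huy1 : G.Adj u y1) (huy2 : G.Adj u y2)
    (hx12 : x1 ≠ x2) (hy12 : y1 ≠ y2) (hx1u : x1 ≠ u) (hx2u : x2 ≠ u)
    (hy1v : y1 ≠ v) (hy2v : y2 ≠ v)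
    (h11 : G.Adj x1 y1) (h12 : G.Adj x1 y2) (h21 : G.Adj x2 y1) (h22 : G.Adj x2 y2) :
    ∃ f : Fin 3 ⊕ Fin 3 → V, Function.Injective f ∧
      ∀ a b, (completeBipartiteGraph (Fin 3) (Fin 3)).Adj a b → G.Adj (f a) (f b) := by
  refine ⟨Sum.elim ![u, x1, x2] ![v, y1, y2], ?_, ?_⟩
  · have huv' : u ≠ v := huv.ne
    have h1 : u ≠ y1 := (huy1.ne)
    have h2 : u ≠ y2 := (huy2.ne)
    have h3 : v ≠ x1 := hvx1.ne
    have h4 : v ≠ x2 := hvx2.ne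
    have h5 : x1 ≠ y1 := h11.ne
    have h6 : x1 ≠ y2 := h12.ne
    have h7 : x2 ≠ y1 := h21.ne
    have h8 : x2 ≠ y2 := h22.ne
    intro a b hab
    rcases a with a | a <;> rcases b with b | b <;> fin_cases a <;> fin_cases b <;>
      simp_all <;> tauto
  · intro a b hab
    rcases a with a | a <;> rcases b with b | b <;> simp at hab <;>
      fin_cases a <;> fin_cases b <;>
      simp [huv, hvx1.symm, hvx2.symm, huy1, huy2, h11, h12, h21, h22,
        huv.symm, huy1.symm, huy2.symm, hvx1, hvx2, h11.symm, h12.symm, h21.symm, h22.symm]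


set_option maxHeartbeats 2000000 in
lemma key {V : Type*} [Fintype V] (G : SimpleGraph V)
    (Δ L : ℝ) (hΔ0 : 0 < Δ) (hL : 10 * Real.sqrt Δ ≤ L)
    (hmax : ∀ w : V, ((G.neighborSet w).ncard : ℝ) ≤ Δ)
    (u v : V) (huv : G.Adj u v)
    (hS : 25 * Δ ≤ ({q : V × V | G.Adj v q.1 ∧ G.Adj u q.2 ∧ G.Adj q.1 q.2 ∧
        q.1 ≠ u ∧ q.2 ≠ v ∧ L ≤ codeg G u q.1}.ncard : ℝ)) :
    ∃ x1 x2 y1 y2 : V, x1 ≠ x2 ∧ y1 ≠ y2 ∧ x1 ≠ u ∧ x2 ≠ u ∧ y1 ≠ v ∧ y2 ≠ v ∧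
      G.Adj v x1 ∧ G.Adj v x2 ∧ G.Adj u y1 ∧ G.Adj u y2 ∧
      G.Adj x1 y1 ∧ G.Adj x1 y2 ∧ G.Adj x2 y1 ∧ G.Adj x2 y2 := by
  classical
  by_contra hcon
  push_neg at hcon
  set A : Finset V := Finset.univ.filter (fun x => G.Adj v x ∧ x ≠ u ∧ L ≤ codeg G u x) with hA
  set B : Finset V := Finset.univ.filter (fun y => G.Adj u y ∧ y ≠ v) with hB
  set E : Finset (V × V) := (A ×ˢ B).filter (fun q => G.Adj q.1 q.2) with hEdef
  -- S ⊆ E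
  have hSsub : {q : V × V | G.Adj v q.1 ∧ G.Adj u q.2 ∧ G.Adj q.1 q.2 ∧
      q.1 ≠ u ∧ q.2 ≠ v ∧ L ≤ codeg G u q.1} ⊆ ↑E := by
    rintro ⟨x, y⟩ ⟨h1, h2, h3, h4, h5, h6⟩
    simp only [hEdef, hA, hB, Finset.coe_filter, Set.mem_setOf_eq, Finset.mem_product,
      Finset.mem_filter, Finset.mem_univ, true_and]
    exact ⟨⟨⟨h1, h4, h6⟩, h2, h5⟩, h3⟩
  have he : 25 * Δ ≤ (E.card : ℝ) := by
    refine le_trans hS ?_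
    have : ({q : V × V | G.Adj v q.1 ∧ G.Adj u q.2 ∧ G.Adj q.1 q.2 ∧
        q.1 ≠ u ∧ q.2 ≠ v ∧ L ≤ codeg G u q.1}).ncard ≤ E.card := by
      rw [← Set.ncard_coe_finset]
      exact Set.ncard_le_ncard hSsub E.finite_toSet
    exact_mod_cast this
  -- degree functions
  have esum_y : E.card = ∑ y ∈ B, (A.filter fun x => G.Adj x y).card := by
    rw [hEdef, Finset.card_filter, Finset.sum_product, Finset.sum_comm]
    exact Finset.sum_congr rfl fun y _ => (Finset.card_filter _ _).symm
  have esum_x : E.card = ∑ x ∈ A, (B.filter fun y => G.Adj x y).card := by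
    rw [hEdef, Finset.card_filter, Finset.sum_product]
    exact Finset.sum_congr rfl fun x _ => (Finset.card_filter _ _).symm
  -- no C4: common neighborhoods in B of two distinct elements of A have size ≤ 1
  have hone : ∀ p ∈ A.offDiag, (B.filter fun y => G.Adj p.1 y ∧ G.Adj p.2 y).card ≤ 1 := by
    rintro ⟨x1, x2⟩ hp
    rw [Finset.mem_offDiag] at hp
    obtain ⟨hx1, hx2, hx12⟩ := hp
    simp only [hA, Finset.mem_filter, Finset.mem_univ, true_and] at hx1 hx2
    refine Finset.card_le_one.2 ?_
    rintro y1 hy1 y2 hy2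
    simp only [hB, Finset.mem_filter, Finset.mem_univ, true_and] at hy1 hy2
    by_contra hy12
    exact hcon x1 x2 y1 y2 hx12 hy12 hx1.2.1 hx2.2.1 hy1.1.2 hy2.1.2 hx1.1 hx2.1
      hy1.1.1 hy2.1.1 hy1.2.1 hy2.2.1 hy1.2.2 hy2.2.2
  -- double count: sum of squares of degrees
  have hoffd : ∀ y : V, (A.filter fun x => G.Adj x y).offDiag
      = A.offDiag.filter (fun p => G.Adj p.1 y ∧ G.Adj p.2 y) := by
    intro y
    ext ⟨p1, p2⟩
    simp only [Finset.mem_offDiag, Finset.mem_filter]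
    tauto
  have hcount : ∑ y ∈ B, (A.filter fun x => G.Adj x y).card ^ 2
      ≤ A.card * A.card + E.card := by
    have h1 : ∀ y ∈ B, (A.filter fun x => G.Adj x y).card ^ 2
        = (A.filter fun x => G.Adj x y).offDiag.card + (A.filter fun x => G.Adj x y).card := by
      intro y _
      rw [Finset.offDiag_card]
      set k := (A.filter fun x => G.Adj x y).card with hk
      have hkk : k ≤ k * k := by
        rcases Nat.eq_zero_or_pos k with h | h
        · simp [h]
        · exact Nat.le_mul_of_pos_left _ h
      rw [sq, Nat.sub_add_cancel hkk]
    rw [Finset.sum_congr rfl h1, Finset.sum_add_distrib, ← esum_y]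
    have h2 : ∑ y ∈ B, (A.filter fun x => G.Adj x y).offDiag.card ≤ A.card * A.card := by
      calc ∑ y ∈ B, (A.filter fun x => G.Adj x y).offDiag.card
          = ∑ y ∈ B, ∑ p ∈ A.offDiag, (if G.Adj p.1 y ∧ G.Adj p.2 y then 1 else 0) := by
            refine Finset.sum_congr rfl fun y _ => ?_
            rw [hoffd y, Finset.card_filter]
        _ = ∑ p ∈ A.offDiag, ∑ y ∈ B, (if G.Adj p.1 y ∧ G.Adj p.2 y then 1 else 0) :=
            Finset.sum_comm
        _ = ∑ p ∈ A.offDiag, (B.filter fun y => G.Adj p.1 y ∧ G.Adj p.2 y).card := by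
            refine Finset.sum_congr rfl fun p _ => (Finset.card_filter _ _).symm
        _ ≤ ∑ _p ∈ A.offDiag, 1 := Finset.sum_le_sum hone
        _ = A.offDiag.card := by simp
        _ ≤ A.card * A.card := by rw [Finset.offDiag_card]; omega
    omega
  -- degree lower bound on A side
  have hdxr : ∀ x ∈ A, L - 1 ≤ ((B.filter fun y => G.Adj x y).card : ℝ) := by
    intro x hx
    simp only [hA, Finset.mem_filter, Finset.mem_univ, true_and] at hx
    obtain ⟨hvx, hxu, hcod⟩ := hx
    have hsub : {w | G.Adj u w ∧ G.Adj x w} ⊆ insert v (↑(B.filter fun y => G.Adj x y)) := by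
      rintro w ⟨hw1, hw2⟩
      rcases eq_or_ne w v with rfl | hwv
      · exact Set.mem_insert _ _
      · refine Set.mem_insert_of_mem _ ?_
        simp only [hB, Finset.coe_filter, Set.mem_setOf_eq, Finset.mem_filter,
          Finset.mem_univ, true_and]
        exact ⟨⟨hw1, hwv⟩, hw2⟩
    have h1 : ({w | G.Adj u w ∧ G.Adj x w} : Set V).ncard
        ≤ (B.filter fun y => G.Adj x y).card + 1 := by
      calc ({w | G.Adj u w ∧ G.Adj x w} : Set V).ncard
          ≤ (insert v (↑(B.filter fun y => G.Adj x y) : Set V)).ncard :=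
            Set.ncard_le_ncard hsub (Set.toFinite _)
        _ ≤ (↑(B.filter fun y => G.Adj x y) : Set V).ncard + 1 := Set.ncard_insert_le _ _
        _ = (B.filter fun y => G.Adj x y).card + 1 := by rw [Set.ncard_coe_finset]
    have : codeg G u x ≤ ((B.filter fun y => G.Adj x y).card : ℝ) + 1 := by
      unfold codeg; exact_mod_cast h1
    linarith
  -- e ≥ t (L-1)
  have ht : (A.card : ℝ) * (L - 1) ≤ (E.card : ℝ) := by
    have h1 := Finset.card_nsmul_le_sum A
      (fun x => ((B.filter fun y => G.Adj x y).card : ℝ)) (L - 1) hdxr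
    rw [nsmul_eq_mul] at h1
    refine h1.trans ?_
    rw [esum_x]
    push_cast
    exact le_refl _
  -- m ≤ Δ
  have hm : ((B.card : ℝ)) ≤ Δ := by
    have hsub : (↑B : Set V) ⊆ G.neighborSet u := by
      intro y hy
      simp only [hB, Finset.coe_filter, Set.mem_setOf_eq, Finset.mem_univ, true_and] at hy
      exact hy.1
    have : (↑B : Set V).ncard ≤ (G.neighborSet u).ncard :=
      Set.ncard_le_ncard hsub (Set.toFinite _)
    rw [Set.ncard_coe_finset] at this
    exact le_trans (by exact_mod_cast this) (hmax u)
  -- √Δ ≥ 10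
  have hs10 : (10 : ℝ) ≤ Real.sqrt Δ := by
    rcases Finset.eq_empty_or_nonempty A with hAe | ⟨x, hx⟩
    · exfalso
      have : E = ∅ := by
        rw [hEdef, hAe]
        simp
      rw [this] at he
      simp at he
      linarith
    · simp only [hA, Finset.mem_filter, Finset.mem_univ, true_and] at hx
      have h1 : L ≤ codeg G u x := hx.2.2
      have h2 : codeg G u x ≤ Δ := by
        have hsub : {w | G.Adj u w ∧ G.Adj x w} ⊆ G.neighborSet u := fun w hw => hw.1
        have : ({w | G.Adj u w ∧ G.Adj x w} : Set V).ncard ≤ (G.neighborSet u).ncard :=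
          Set.ncard_le_ncard hsub (Set.toFinite _)
        refine le_trans ?_ (hmax u)
        unfold codeg
        exact_mod_cast this
      have hspos : 0 < Real.sqrt Δ := Real.sqrt_pos.2 hΔ0
      have h3 : 10 * Real.sqrt Δ ≤ Real.sqrt Δ * Real.sqrt Δ := by
        rw [Real.mul_self_sqrt hΔ0.le]; linarith
      nlinarith
  -- Cauchy-Schwarz
  have csr : ((E.card : ℝ)) ^ 2
      ≤ (B.card : ℝ) * ∑ y ∈ B, ((A.filter fun x => G.Adj x y).card : ℝ) ^ 2 := by
    have h1 := Finset.sum_mul_sq_le_sq_mul_sq B (fun _ => (1 : ℝ))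
      (fun y => ((A.filter fun x => G.Adj x y).card : ℝ))
    simp only [one_mul, one_pow] at h1
    have h2 : ∑ _y ∈ B, (1 : ℝ) = (B.card : ℝ) := by simp
    rw [h2] at h1
    have h3 : ((E.card : ℝ)) = ∑ y ∈ B, ((A.filter fun x => G.Adj x y).card : ℝ) := by
      rw [esum_y]; push_cast; exact rfl
    rw [h3]
    exact h1
  have hsumsq : ∑ y ∈ B, ((A.filter fun x => G.Adj x y).card : ℝ) ^ 2
      ≤ (A.card : ℝ) * (A.card : ℝ) + (E.card : ℝ) := by
    have := hcount
    push_cast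
    exact_mod_cast this
  -- final contradiction
  set s := Real.sqrt Δ with hsdef
  set t : ℝ := (A.card : ℝ) with htdef
  set m : ℝ := (B.card : ℝ) with hmdef
  set e : ℝ := (E.card : ℝ) with hedef
  have hss : s * s = Δ := Real.mul_self_sqrt hΔ0.le
  have htnn : (0 : ℝ) ≤ t := Nat.cast_nonneg _
  have hmnn : (0 : ℝ) ≤ m := Nat.cast_nonneg _
  have hsnn : (0 : ℝ) ≤ s := Real.sqrt_nonneg _
  have hepos : (0 : ℝ) < e := lt_of_lt_of_le (by positivity) he
  have h9s : 9 * s ≤ L - 1 := by linarith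
  have h9 : 9 * (s * t) ≤ e := by
    have := mul_le_mul_of_nonneg_left h9s htnn
    calc 9 * (s * t) = t * (9 * s) := by ring
      _ ≤ t * (L - 1) := this
      _ ≤ e := ht
  have h81 : 81 * ((s * t) * (s * t)) ≤ e * e := by
    have hnn : (0 : ℝ) ≤ 9 * (s * t) := by positivity
    have := mul_self_le_mul_self hnn h9
    nlinarith [this]
  have hE2 : e ^ 2 ≤ Δ * (t * t) + Δ * e := by
    have h1 : e ^ 2 ≤ m * (t * t + e) := le_trans csr (mul_le_mul_of_nonneg_left hsumsq hmnn)
    have h2 : m * (t * t + e) ≤ Δ * (t * t + e) := by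
      have : (0:ℝ) ≤ t * t + e := by positivity
      exact mul_le_mul_of_nonneg_right hm this
    nlinarith [h1, h2]
  have hΔt : Δ * (t * t) ≤ e * e / 81 := by
    have : Δ * (t * t) = (s * t) * (s * t) := by rw [← hss]; ring
    rw [this]; linarith
  have hΔe : Δ * e ≤ e * e / 25 := by
    have : Δ ≤ e / 25 := by linarith
    have := mul_le_mul_of_nonneg_right this (le_of_lt hepos)
    calc Δ * e ≤ (e / 25) * e := this
      _ = e * e / 25 := by ring
  have : e * e ≤ e * e / 81 + e * e / 25 := by
    have : e ^ 2 = e * e := sq e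
    linarith [hE2, hΔt, hΔe]
  nlinarith [this, mul_pos hepos hepos]

/-- If an edge `uv` of a bipartite graph `G` with `Δ(G) ≤ CD√n` lies in at least
`50·C·D·√n` four-cycles `uvxy` with `max{d(u,x), d(v,y)} ≥ 10·√(CD)·n^{1/4}`,
then `G` contains a copy of `K_{3,3}`. -/
theorem stmt_13 {V : Type*} [Fintype V] (G : SimpleGraph V) (C D : ℝ)
    (hC : 0 < C) (hD : 0 < D)
    (hbip : G.Colorable 2)
    (hmaxdeg : ∀ w : V, ((G.neighborSet w).ncard : ℝ) ≤
      C * D * Real.sqrt (Fintype.card V))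
    (u v : V) (huv : G.Adj u v)
    (hmany : 50 * C * D * Real.sqrt (Fintype.card V) ≤
      ({q : V × V | G.Adj v q.1 ∧ G.Adj u q.2 ∧ G.Adj q.1 q.2 ∧
          q.1 ≠ u ∧ q.2 ≠ v ∧
          10 * Real.sqrt (C * D) * (Fintype.card V : ℝ) ^ ((1 : ℝ) / 4) ≤
            max (codeg G u q.1) (codeg G v q.2)}.ncard : ℝ)) :
    ∃ f : Fin 3 ⊕ Fin 3 → V, Function.Injective f ∧
      ∀ a b, (completeBipartiteGraph (Fin 3) (Fin 3)).Adj a b → G.Adj (f a) (f b) := by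
  classical
  have hn : 0 < ((Fintype.card V : ℕ) : ℝ) := by
    have : 0 < Fintype.card V := Fintype.card_pos_iff.2 ⟨u⟩
    exact_mod_cast this
  set Δ : ℝ := C * D * Real.sqrt (Fintype.card V) with hΔdef
  set L : ℝ := 10 * Real.sqrt (C * D) * (Fintype.card V : ℝ) ^ ((1 : ℝ) / 4) with hLdef
  have hΔ0 : 0 < Δ := by
    have : 0 < Real.sqrt (Fintype.card V) := Real.sqrt_pos.2 hn
    rw [hΔdef]; positivity
  have hLs : 10 * Real.sqrt Δ ≤ L := by
    have h4 : ((Fintype.card V : ℝ)) ^ ((1 : ℝ) / 4) = Real.sqrt (Real.sqrt (Fintype.card V)) := by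
      rw [Real.sqrt_eq_rpow, Real.sqrt_eq_rpow, ← Real.rpow_mul hn.le]
      norm_num
    have h5 : Real.sqrt Δ = Real.sqrt (C * D) * Real.sqrt (Real.sqrt (Fintype.card V)) := by
      rw [hΔdef, Real.sqrt_mul (by positivity)]
    rw [h5, hLdef, h4]
    ring_nf
    exact le_refl _
  set S1 : Set (V × V) := {q : V × V | G.Adj v q.1 ∧ G.Adj u q.2 ∧ G.Adj q.1 q.2 ∧
      q.1 ≠ u ∧ q.2 ≠ v ∧ L ≤ codeg G u q.1} with hS1def
  set S2 : Set (V × V) := {q : V × V | G.Adj v q.1 ∧ G.Adj u q.2 ∧ G.Adj q.1 q.2 ∧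
      q.1 ≠ u ∧ q.2 ≠ v ∧ L ≤ codeg G v q.2} with hS2def
  have hsub : {q : V × V | G.Adj v q.1 ∧ G.Adj u q.2 ∧ G.Adj q.1 q.2 ∧
      q.1 ≠ u ∧ q.2 ≠ v ∧ L ≤ max (codeg G u q.1) (codeg G v q.2)} ⊆ S1 ∪ S2 := by
    rintro ⟨x, y⟩ ⟨h1, h2, h3, h4, h5, h6⟩
    rcases le_max_iff.1 h6 with h | h
    · exact Or.inl ⟨h1, h2, h3, h4, h5, h⟩
    · exact Or.inr ⟨h1, h2, h3, h4, h5, h⟩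
  have hcards : 50 * Δ ≤ ((S1.ncard : ℝ)) + ((S2.ncard : ℝ)) := by
    have h1 : ({q : V × V | G.Adj v q.1 ∧ G.Adj u q.2 ∧ G.Adj q.1 q.2 ∧
        q.1 ≠ u ∧ q.2 ≠ v ∧ L ≤ max (codeg G u q.1) (codeg G v q.2)}).ncard
        ≤ S1.ncard + S2.ncard := by
      refine le_trans (Set.ncard_le_ncard hsub (Set.toFinite _)) (Set.ncard_union_le _ _)
    have h2 : 50 * Δ ≤ (({q : V × V | G.Adj v q.1 ∧ G.Adj u q.2 ∧ G.Adj q.1 q.2 ∧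
        q.1 ≠ u ∧ q.2 ≠ v ∧ L ≤ max (codeg G u q.1) (codeg G v q.2)}).ncard : ℝ) := by
      refine le_trans (le_of_eq (by rw [hΔdef]; ring)) hmany
    exact le_trans h2 (by exact_mod_cast h1)
  rcases le_or_gt (25 * Δ) ((S1.ncard : ℝ)) with hbig | hsmall
  · obtain ⟨x1, x2, y1, y2, hx12, hy12, hx1u, hx2u, hy1v, hy2v, hvx1, hvx2, huy1, huy2,
      h11, h12, h21, h22⟩ := key G Δ L hΔ0 hLs hmaxdeg u v huv hbig
    exact build_k33 G u v x1 x2 y1 y2 huv hvx1 hvx2 huy1 huy2 hx12 hy12 hx1u hx2u hy1v hy2v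
      h11 h12 h21 h22
  · have hbig2 : 25 * Δ ≤ ((S2.ncard : ℝ)) := by linarith
    have himg : Prod.swap '' S2 = {q : V × V | G.Adj u q.1 ∧ G.Adj v q.2 ∧ G.Adj q.1 q.2 ∧
        q.1 ≠ v ∧ q.2 ≠ u ∧ L ≤ codeg G v q.1} := by
      ext ⟨a, b⟩
      constructor
      · rintro ⟨⟨x, y⟩, ⟨h1, h2, h3, h4, h5, h6⟩, heq⟩
        obtain ⟨rfl, rfl⟩ : y = a ∧ x = b := by
          simpa [Prod.ext_iff] using heq
        exact ⟨h2, h1, h3.symm, h5, h4, h6⟩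
      · rintro ⟨h1, h2, h3, h4, h5, h6⟩
        exact ⟨(b, a), ⟨h2, h1, h3.symm, h5, h4, h6⟩, rfl⟩
    have hcard2 : ({q : V × V | G.Adj u q.1 ∧ G.Adj v q.2 ∧ G.Adj q.1 q.2 ∧
        q.1 ≠ v ∧ q.2 ≠ u ∧ L ≤ codeg G v q.1}).ncard = S2.ncard := by
      rw [← himg]
      exact Set.ncard_image_of_injective _ Prod.swap_injective
    have hbig3 : 25 * Δ ≤ (({q : V × V | G.Adj u q.1 ∧ G.Adj v q.2 ∧ G.Adj q.1 q.2 ∧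
        q.1 ≠ v ∧ q.2 ≠ u ∧ L ≤ codeg G v q.1}).ncard : ℝ) := by
      rw [hcard2]; exact hbig2
    obtain ⟨x1, x2, y1, y2, hx12, hy12, hx1v, hx2v, hy1u, hy2u, hux1, hux2, hvy1, hvy2,
      h11, h12, h21, h22⟩ := key G Δ L hΔ0 hLs hmaxdeg v u huv.symm hbig3
    exact build_k33 G v u x1 x2 y1 y2 huv.symm hux1 hux2 hvy1 hvy2 hx12 hy12 hx1v hx2v
      hy1u hy2u h11 h12 h21 h22
end

section
/- Let H_0 be a 1/2-maximal graph on m vertices with e(H_0) = 2C_0·m^{3/2}, let U be the set of vertices of degree at least C_0·D·m^{1/2} in H_0 (where D ≥ 1000), and let t be the number of edges incident to U. Then t ≤ 64·C_0·m^{3/2}/D. -/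
/-!
Write `m = |V|`, `θ = C₀ D √m` and `t` for the number of edges meeting `U`. Double counting
edge–endpoint incidences gives `|U| θ ≤ 2t`, so `|U| ≤ s := 2t/θ`, and `s ≤ 4m/D` because
`t ≤ e(H) ≤ 2C₀ m^{3/2}`. Instead of a uniformly random `s`-subset of `V ∖ U` we take one, `W`,
maximising the number of edges into `U`: it receives at least an `s/|V ∖ U|` share of them, so
`s t ≤ m · e(U ∪ W) ≤ m · 2C₀ (2s)^{3/2}`. Hence `t² ≤ 32 C₀² m² s ≤ 64 C₀ m^{3/2} t / D`.
-/

open Finset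

theorem Finset.exists_subset_card_eq_nsmul_sum_le {α M : Type*} [DecidableEq α] [AddCommMonoid M]
    [LinearOrder M] [IsOrderedCancelAddMonoid M] (A : Finset α) (f : α → M) {s : ℕ}
    (hs : s ≤ #A) : ∃ W ⊆ A, #W = s ∧ s • ∑ v ∈ A, f v ≤ #A • ∑ v ∈ W, f v := by
  obtain ⟨W, hW, hmax⟩ := exists_max_image (A.powersetCard s) (∑ v ∈ ·, f v)
    (powersetCard_nonempty.mpr hs)
  obtain ⟨hWA, rfl⟩ := mem_powersetCard.mp hW
  refine ⟨W, hWA, rfl, ?_⟩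
  -- exchanging `w ∈ W` for `u ∉ W` cannot increase the sum
  have hexch : ∀ u ∈ A \ W, ∀ w ∈ W, f u ≤ f w := by
    intro u hu w hw
    obtain ⟨huA, huW⟩ := mem_sdiff.mp hu
    have hu' : u ∉ W.erase w := fun h => huW (mem_of_mem_erase h)
    have hmem : insert u (W.erase w) ∈ A.powersetCard #W := by
      refine mem_powersetCard.mpr ⟨insert_subset huA ((erase_subset _ _).trans hWA), ?_⟩
      rw [card_insert_of_notMem hu', card_erase_add_one hw]
    have := hmax _ hmem
    rw [sum_insert hu', ← sum_erase_add _ _ hw, add_comm] at this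
    exact le_of_add_le_add_left this
  have hcross : #W • ∑ u ∈ A \ W, f u ≤ #(A \ W) • ∑ w ∈ W, f w := by
    calc #W • ∑ u ∈ A \ W, f u = ∑ u ∈ A \ W, ∑ _w ∈ W, f u := by
          rw [smul_sum]; simp only [sum_const]
      _ ≤ ∑ u ∈ A \ W, ∑ w ∈ W, f w := sum_le_sum fun u hu => sum_le_sum (hexch u hu)
      _ = #(A \ W) • ∑ w ∈ W, f w := by rw [sum_const]
  calc #W • ∑ v ∈ A, f v = #W • ∑ w ∈ W, f w + #W • ∑ u ∈ A \ W, f u := by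
        rw [← sum_sdiff hWA, smul_add, add_comm]
    _ ≤ #W • ∑ w ∈ W, f w + #(A \ W) • ∑ w ∈ W, f w := add_le_add_right hcross _
    _ = #A • ∑ v ∈ W, f v := by rw [← add_smul, add_comm, card_sdiff_add_card_eq_card hWA]

theorem Real.rpow_three_halves {x : ℝ} (hx : 0 ≤ x) : x ^ ((3 : ℝ) / 2) = x * √x := by
  rw [show (3 : ℝ) / 2 = 1 + 1 / 2 by norm_num, rpow_one_add' hx (by norm_num), sqrt_eq_rpow]

theorem le_div_of_mul_le_rpow_three_halves {C₀ D m s t : ℝ} (hC₀ : 0 < C₀) (hD : 0 < D)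
    (hm : 0 < m) (hs : 0 < s) (hsσ : s * (C₀ * D * √m) ≤ 2 * t)
    (hst : s * t ≤ m * (2 * C₀ * (2 * s) ^ ((3 : ℝ) / 2))) :
    t ≤ 64 * C₀ * m ^ ((3 : ℝ) / 2) / D := by
  rw [Real.rpow_three_halves hm.le, le_div_iff₀ hD]
  rw [Real.rpow_three_halves (by positivity)] at hst
  obtain ⟨r, hr, rfl⟩ : ∃ r, 0 < r ∧ m = r ^ 2 := ⟨√m, by positivity, (Real.sq_sqrt hm.le).symm⟩
  obtain ⟨q, hq, hqs⟩ : ∃ q, 0 < q ∧ 2 * s = q ^ 2 :=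
    ⟨√(2 * s), by positivity, (Real.sq_sqrt (by positivity)).symm⟩
  rw [Real.sqrt_sq hr.le] at hsσ ⊢
  rw [hqs, Real.sqrt_sq hq.le] at hst
  have hCDr : 0 < C₀ * D * r := by positivity
  have ht : 0 ≤ t := by nlinarith
  have ht₁ : t ≤ 4 * C₀ * r ^ 2 * q :=
    le_of_mul_le_mul_left (hst.trans_eq (by linear_combination -(2 * C₀ * r ^ 2 * q) * hqs)) hs
  have hsq : t ^ 2 ≤ 32 * C₀ ^ 2 * r ^ 4 * s := by nlinarith [mul_self_le_mul_self ht ht₁]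
  rcases ht.eq_or_lt with rfl | ht
  · rw [zero_mul]; positivity
  have : t * (C₀ * D * r) ≤ 64 * C₀ ^ 2 * r ^ 4 := le_of_mul_le_mul_left (by nlinarith) ht
  nlinarith

namespace SimpleGraph

variable {V : Type*} [Fintype V] (G : SimpleGraph V) [DecidableRel G.Adj]

theorem ncard_sep_edgeSet (p : Sym2 V → Prop) [DecidablePred p] :
    {e ∈ G.edgeSet | p e}.ncard = #{e ∈ G.edgeFinset | p e} := by
  rw [← Set.ncard_coe_finset, coe_filter]
  simp only [mem_edgeFinset]

theorem ncard_neighborSet (v : V) : (G.neighborSet v).ncard = G.degree v := by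
  rw [← Nat.card_coe_set_eq, Nat.card_eq_fintype_card, card_neighborSet_eq_degree]

variable [DecidableEq V]

def edgesWithin (S : Finset V) : Finset (Sym2 V) := {e ∈ G.edgeFinset | ∀ v ∈ e, v ∈ S}

def edgesMeeting (S : Finset V) : Finset (Sym2 V) := {e ∈ G.edgeFinset | ∃ v ∈ e, v ∈ S}

def edgesFrom (v : V) (S : Finset V) : Finset (Sym2 V) := (G.neighborFinset v ∩ S).image (s(v, ·))

variable {G}

theorem card_edgesFrom (v : V) (S : Finset V) :
    #(G.edgesFrom v S) = #(G.neighborFinset v ∩ S) :=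
  card_image_of_injective _ fun _ _ h => Sym2.congr_right.mp h

theorem edgesMeeting_subset (S : Finset V) :
    G.edgesMeeting S ⊆ G.edgesWithin S ∪ Sᶜ.biUnion (G.edgesFrom · S) := by
  intro e he
  obtain ⟨heG, u, hue, huS⟩ := mem_filter.mp he
  by_cases hall : ∀ v ∈ e, v ∈ S
  · exact mem_union_left _ (mem_filter.mpr ⟨heG, hall⟩)
  obtain ⟨v, hve, hvS⟩ := not_forall₂.mp hall
  have huv : e = s(v, u) :=
    (Sym2.mem_and_mem_iff (by rintro rfl; exact hvS huS)).mp ⟨hve, hue⟩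
  subst huv
  refine mem_union_right _ (mem_biUnion.mpr ⟨v, mem_compl.mpr hvS, mem_image.mpr ⟨u, ?_, rfl⟩⟩)
  exact mem_inter.mpr ⟨(mem_neighborFinset _ _ _).mpr (mem_edgeFinset.mp heG), huS⟩

theorem card_edgesMeeting_le (S : Finset V) :
    #(G.edgesMeeting S) ≤ #(G.edgesWithin S) + ∑ v ∈ Sᶜ, #(G.neighborFinset v ∩ S) := by
  calc #(G.edgesMeeting S) ≤ #(G.edgesWithin S ∪ Sᶜ.biUnion (G.edgesFrom · S)) :=
        card_le_card (edgesMeeting_subset S)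
    _ ≤ #(G.edgesWithin S) + ∑ v ∈ Sᶜ, #(G.edgesFrom v S) :=
        (card_union_le _ _).trans (Nat.add_le_add_left card_biUnion_le _)
    _ = _ := by simp only [card_edgesFrom]

theorem card_edgesWithin_add_sum_le {S W : Finset V} (hSW : Disjoint S W) :
    #(G.edgesWithin S) + ∑ w ∈ W, #(G.neighborFinset w ∩ S) ≤ #(G.edgesWithin (S ∪ W)) := by
  have hW : ∀ w ∈ W, w ∉ S := fun w hw hwS => Finset.disjoint_left.mp hSW hwS hw
  have hdisj : Disjoint (G.edgesWithin S) (W.biUnion (G.edgesFrom · S)) := by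
    refine Finset.disjoint_left.mpr fun e he hbe => ?_
    obtain ⟨w, hwW, hwe⟩ := mem_biUnion.mp hbe
    obtain ⟨u, -, rfl⟩ := mem_image.mp hwe
    exact hW w hwW ((mem_filter.mp he).2 w (Sym2.mem_mk_left w u))
  have hpair : (W : Set V).PairwiseDisjoint (G.edgesFrom · S) := by
    intro x hx y hy hxy
    refine Finset.disjoint_left.mpr fun e hex hey => ?_
    obtain ⟨a, -, rfl⟩ := mem_image.mp hex
    obtain ⟨b, hb, hab⟩ := mem_image.mp hey
    rcases Sym2.eq_iff.mp hab with ⟨h, -⟩ | ⟨-, h⟩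
    · exact hxy h.symm
    · exact hW x hx (h ▸ (mem_inter.mp hb).2)
  have hsub : G.edgesWithin S ∪ W.biUnion (G.edgesFrom · S) ⊆ G.edgesWithin (S ∪ W) := by
    intro e he
    rcases mem_union.mp he with he | he
    · obtain ⟨heG, hall⟩ := mem_filter.mp he
      exact mem_filter.mpr ⟨heG, fun v hv => mem_union_left _ (hall v hv)⟩
    · obtain ⟨w, hwW, hwe⟩ := mem_biUnion.mp he
      obtain ⟨u, hu, rfl⟩ := mem_image.mp hwe
      obtain ⟨hadj, huS⟩ := mem_inter.mp hu
      refine mem_filter.mpr ⟨mem_edgeFinset.mpr ((mem_neighborFinset _ _ _).mp hadj), ?_⟩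
      rintro v hv
      rcases Sym2.mem_iff.mp hv with rfl | rfl
      · exact mem_union_right _ hwW
      · exact mem_union_left _ huS
  calc #(G.edgesWithin S) + ∑ w ∈ W, #(G.neighborFinset w ∩ S)
      = #(G.edgesWithin S ∪ W.biUnion (G.edgesFrom · S)) := by
        rw [card_union_of_disjoint hdisj, card_biUnion hpair]; simp only [card_edgesFrom]
    _ ≤ _ := card_le_card hsub

theorem card_nsmul_le_card_edgesMeeting_nsmul {R : Type*} [Semiring R] [PartialOrder R]
    [IsOrderedRing R] {S : Finset V} {k : R} (hk : ∀ u ∈ S, k ≤ G.degree u) :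
    #S • k ≤ #(G.edgesMeeting S) • (2 : R) := by
  refine card_nsmul_le_card_nsmul (· ∈ ·) (fun u hu => (hk u hu).trans ?_) fun e _ => ?_
  · rw [← card_incidenceFinset_eq_degree, incidenceFinset_eq_filter]
    exact Nat.mono_cast <| card_le_card fun e he =>
      mem_filter.mpr ⟨mem_filter.mpr ⟨(mem_filter.mp he).1, u, (mem_filter.mp he).2, hu⟩,
        (mem_filter.mp he).2⟩
  · have : #(S.bipartiteBelow (· ∈ ·) e) ≤ 2 := by
      refine (card_le_card fun v hv => Sym2.mem_toFinset.mpr (mem_filter.mp hv).2).trans ?_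
      rw [Sym2.card_toFinset]; split_ifs <;> norm_num
    exact (Nat.mono_cast this).trans_eq Nat.cast_ofNat

theorem exists_mul_card_edgesMeeting_le (S : Finset V) {s : ℕ}
    (hs : s + #S ≤ Fintype.card V) :
    ∃ W, Disjoint S W ∧ #W = s ∧
      s * #(G.edgesMeeting S) ≤ Fintype.card V * #(G.edgesWithin (S ∪ W)) := by
  have hA : s ≤ #Sᶜ := by rw [card_compl]; omega
  obtain ⟨W, hWA, hW, hsum⟩ :=
    Sᶜ.exists_subset_card_eq_nsmul_sum_le (fun v => #(G.neighborFinset v ∩ S)) hA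
  have hSW : Disjoint S W := disjoint_of_subset_right hWA disjoint_compl_right
  refine ⟨W, hSW, hW, ?_⟩
  rw [smul_eq_mul, smul_eq_mul] at hsum
  calc s * #(G.edgesMeeting S)
      ≤ s * #(G.edgesWithin S) + s * ∑ v ∈ Sᶜ, #(G.neighborFinset v ∩ S) := by
        rw [← mul_add]; exact Nat.mul_le_mul_left _ (card_edgesMeeting_le S)
    _ ≤ Fintype.card V * #(G.edgesWithin S) +
          Fintype.card V * ∑ w ∈ W, #(G.neighborFinset w ∩ S) :=
        add_le_add (Nat.mul_le_mul_right _ (by omega))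
          (hsum.trans (Nat.mul_le_mul_right _ (card_le_univ _)))
    _ ≤ Fintype.card V * #(G.edgesWithin (S ∪ W)) := by
        rw [← mul_add]; exact Nat.mul_le_mul_left _ (card_edgesWithin_add_sum_le hSW)

theorem card_edgesMeeting_le_of_card_edgesWithin_le {C₀ D : ℝ} (hC₀ : 0 < C₀) (hD : 8 ≤ D)
    (hmax : ∀ S : Finset V, (#(G.edgesWithin S) : ℝ) ≤ 2 * C₀ * (#S : ℝ) ^ ((3 : ℝ) / 2))
    {U : Finset V} (hU : ∀ u ∈ U, C₀ * D * √(Fintype.card V) ≤ G.degree u) :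
    (#(G.edgesMeeting U) : ℝ) ≤ 64 * C₀ * (Fintype.card V : ℝ) ^ ((3 : ℝ) / 2) / D := by
  set m := Fintype.card V
  set t := #(G.edgesMeeting U)
  set thr := C₀ * D * √(m : ℝ)
  rcases t.eq_zero_or_pos with ht | ht
  · rw [ht, Nat.cast_zero]; positivity
  obtain ⟨e, he⟩ := card_pos.mp ht
  obtain ⟨-, u, -, hu⟩ := mem_filter.mp he
  have hm : 0 < (m : ℝ) := Nat.cast_pos.mpr (Fintype.card_pos_iff.mpr ⟨u⟩)
  have hthr : 0 < thr := by positivity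
  have hUt : #U * thr ≤ 2 * t := by
    simpa only [nsmul_eq_mul, mul_comm] using card_nsmul_le_card_edgesMeeting_nsmul hU
  have htE : (t : ℝ) ≤ 2 * C₀ * m ^ ((3 : ℝ) / 2) := by
    calc (t : ℝ) ≤ #(G.edgesWithin univ) :=
          Nat.mono_cast (card_le_card (monotone_filter_right _ fun _ _ _ v _ => mem_univ v))
      _ ≤ _ := by simpa only [card_univ] using hmax univ
  -- `s` is the paper's `2t/(C₀ D √m)`, rounded down
  set s := ⌊2 * t / thr⌋₊
  have hsσ : (s : ℝ) ≤ 2 * t / thr := Nat.floor_le (by positivity)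
  have hUs : #U ≤ s := Nat.le_floor ((le_div_iff₀ hthr).mpr hUt)
  have hσ : 2 * t / thr ≤ m / 2 := by
    rw [Real.rpow_three_halves hm.le] at htE
    rw [div_le_iff₀ hthr]
    nlinarith [mul_pos hC₀ (Real.sqrt_pos.mpr hm)]
  have hs : s + #U ≤ m := by
    have : (s : ℝ) + #U ≤ m := by linarith [(Nat.cast_le.mpr hUs : (#U : ℝ) ≤ s)]
    exact_mod_cast this
  obtain ⟨W, hUW, hW, hkey⟩ := G.exists_mul_card_edgesMeeting_le U hs
  have hcard : (#(U ∪ W) : ℝ) ≤ 2 * s := by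
    rw [card_union_of_disjoint hUW, Nat.cast_add, hW]
    linarith [(Nat.cast_le.mpr hUs : (#U : ℝ) ≤ s)]
  refine le_div_of_mul_le_rpow_three_halves hC₀ (by linarith) hm
    (Nat.cast_pos.mpr (card_pos.mpr ⟨u, hu⟩ |>.trans_le hUs)) ((le_div_iff₀ hthr).mp hsσ) ?_
  calc (s : ℝ) * t ≤ m * #(G.edgesWithin (U ∪ W)) := by exact_mod_cast hkey
    _ ≤ m * (2 * C₀ * (2 * s) ^ ((3 : ℝ) / 2)) := by
        gcongr
        exact (hmax _).trans (by gcongr)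

end SimpleGraph

theorem stmt_18_general {V : Type*} [Fintype V] (H : SimpleGraph V) (C₀ D : ℝ)
    (hC₀ : 0 < C₀) (hD : 1000 ≤ D)
    (hmax : ∀ S : Set V, ({e ∈ H.edgeSet | ∀ v ∈ e, v ∈ S}.ncard : ℝ) ≤
      2 * C₀ * (S.ncard : ℝ) ^ ((3 : ℝ) / 2)) :
    ({e ∈ H.edgeSet | ∃ v ∈ e,
        C₀ * D * Real.sqrt (Fintype.card V) ≤ ((H.neighborSet v).ncard : ℝ)}.ncard : ℝ) ≤
      64 * C₀ * (Fintype.card V : ℝ) ^ ((3 : ℝ) / 2) / D := by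
  classical
  have hmax' (S : Finset V) :
      (#(H.edgesWithin S) : ℝ) ≤ 2 * C₀ * (#S : ℝ) ^ ((3 : ℝ) / 2) := by
    have := hmax S
    rwa [SimpleGraph.ncard_sep_edgeSet, Set.ncard_coe_finset] at this
  convert H.card_edgesMeeting_le_of_card_edgesWithin_le
    (U := {v | C₀ * D * √(Fintype.card V) ≤ H.degree v}) hC₀ (by linarith) hmax'
    (fun u hu => (mem_filter.mp hu).2) using 3
  simp [SimpleGraph.ncard_sep_edgeSet, SimpleGraph.ncard_neighborSet, SimpleGraph.edgesMeeting]

/-- In a `1/2`-maximal graph `H` on `m` vertices with `2C₀·m^{3/2}` edges (the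
`1/2`-maximality being used in the form: every vertex set `S` spans at most
`2C₀·|S|^{3/2}` edges), the number of edges incident to the set `U` of vertices of degree
at least `C₀·D·√m` is at most `64·C₀·m^{3/2}/D`, provided `D ≥ 1000`. -/
theorem stmt_18 {V : Type*} [Fintype V] (H : SimpleGraph V) (C₀ D : ℝ)
    (hC₀ : 0 < C₀) (hD : 1000 ≤ D)
    (hmax : ∀ S : Set V, ({e ∈ H.edgeSet | ∀ v ∈ e, v ∈ S}.ncard : ℝ) ≤
      2 * C₀ * (S.ncard : ℝ) ^ ((3 : ℝ) / 2))
    (hE : (H.edgeSet.ncard : ℝ) = 2 * C₀ * (Fintype.card V : ℝ) ^ ((3 : ℝ) / 2)) :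
    ({e ∈ H.edgeSet | ∃ v ∈ e,
        C₀ * D * Real.sqrt (Fintype.card V) ≤ ((H.neighborSet v).ncard : ℝ)}.ncard : ℝ) ≤
      64 * C₀ * (Fintype.card V : ℝ) ^ ((3 : ℝ) / 2) / D :=
  stmt_18_general H C₀ D hC₀ hD hmax
end

section
/- Let G be a bipartite graph on n vertices whose edges are colored red, blue, and purple, and let U be the set of vertices v with d_p(v) < d(v)/2 and d_b(v), d_r(v) ≥ η·d(v) (where d_b, d_r, d_p denote blue-, red-, purple-degree and 0 < η < 1/4). Let e_U = Σ_{v∈U} d(v). If e_U ≥ (20/η^{1/2})·n^{3/2}, then G contains at least (η²/100)·e_U⁴/n⁴ four-cycles xuyv with u, v ∈ U such that xu, xv are red and uy, vy are blue. -/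
/-!
For `u ∈ U` the red and blue degrees add up to more than `d(u)/2` and are both at least `η d(u)`,
so `u` is the middle of at least `d_r(u) d_b(u) ≥ (η/4) d(u)²` red-blue paths `x u y`. By
Cauchy–Schwarz over `U` there are `P ≥ η e_U² / (4n)` such paths, and the hypothesis on `e_U`
makes this at least `100 n²`. If `m(x, y)` is the number of middles of paths from `x` to `y`, the
four-cycles are the pairs of distinct middles, `∑ (m² - m) ≥ P²/n² - P`, by Cauchy–Schwarz over
the `n²` pairs `(x, y)`; since `P ≥ 100 n²` this is at least `(99/100) P²/n²`.
-/

/-- The degree of `v` in `G`, as a real number. -/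
noncomputable def deg {V : Type*} (G : SimpleGraph V) (v : V) : ℝ :=
  ((G.neighborSet v).ncard : ℝ)

/-- The set `U` of vertices `v` with `d_p(v) < d(v)/2` and `d_b(v), d_r(v) ≥ η·d(v)`,
where the edges of `G = R ⊔ B ⊔ P` are colored red, blue, purple. -/
def Uset {V : Type*} (R B P : SimpleGraph V) (η : ℝ) : Set V :=
  {v | deg P v < deg (R ⊔ B ⊔ P) v / 2 ∧
    η * deg (R ⊔ B ⊔ P) v ≤ deg B v ∧ η * deg (R ⊔ B ⊔ P) v ≤ deg R v}

open Finset

section Counting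

variable {α β γ : Type*} [Fintype α] [Fintype β]

theorem card_filter_quadruples_eq_sum_card_offDiag [Fintype γ] [DecidableEq γ]
    (C : α → β → γ → Prop) [∀ x y u, Decidable (C x y u)] :
    #{q : α × γ × β × γ | C q.1 q.2.2.1 q.2.1 ∧ C q.1 q.2.2.1 q.2.2.2 ∧ q.2.1 ≠ q.2.2.2} =
      ∑ x, ∑ y, #({u | C x y u} : Finset γ).offDiag := by
  classical
  rw [card_eq_sum_card_fiberwise (f := fun q => (q.1, q.2.2.1)) (t := univ)
    (fun _ _ => mem_univ _), Fintype.sum_prod_type]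
  refine sum_congr rfl fun x _ => sum_congr rfl fun y _ => ?_
  refine card_nbij' (fun q => (q.2.1, q.2.2.2)) (fun p => (x, p.1, y, p.2)) ?_ ?_ ?_ ?_
  · rintro ⟨x', u, y', v⟩; aesop
  · rintro ⟨u, v⟩; aesop
  · rintro ⟨x', u, y', v⟩; aesop
  · rintro ⟨u, v⟩; aesop

theorem sum_sum_card_filter_and_eq_sum_mul (s : Finset γ) (r : α → γ → Prop) (b : γ → β → Prop)
    [DecidableRel r] [DecidableRel b] :
    ∑ x, ∑ y, #{u ∈ s | r x u ∧ b u y} = ∑ u ∈ s, #{x | r x u} * #{y | b u y} := by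
  simp only [card_filter, sum_mul_sum, ite_zero_mul_ite_zero, one_mul]
  calc _ = ∑ x, ∑ u ∈ s, ∑ y, if r x u ∧ b u y then 1 else 0 :=
        sum_congr rfl fun x _ => sum_comm
    _ = _ := sum_comm

theorem sq_sum_sum_le_card_mul_sum_sum_sq (f : α → β → ℝ) :
    (∑ x, ∑ y, f x y) ^ 2 ≤ (Fintype.card α * Fintype.card β) * ∑ x, ∑ y, f x y ^ 2 := by
  have := sq_sum_le_card_mul_sum_sq (s := (univ : Finset (α × β))) (f := fun p => f p.1 p.2)
  simpa [Fintype.sum_prod_type] using this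

end Counting

lemma mul_sq_sum_le_card_mul_sum {ι : Type*} (s : Finset ι) {c : ℝ} (hc : 0 ≤ c) {d f : ι → ℝ}
    (h : ∀ i ∈ s, c * d i ^ 2 ≤ f i) : c * (∑ i ∈ s, d i) ^ 2 ≤ #s * ∑ i ∈ s, f i :=
  calc c * (∑ i ∈ s, d i) ^ 2 ≤ c * (#s * ∑ i ∈ s, d i ^ 2) :=
        mul_le_mul_of_nonneg_left (sq_sum_le_card_mul_sum_sq ..) hc
    _ = #s * ∑ i ∈ s, c * d i ^ 2 := by rw [mul_sum, mul_sum, mul_sum]; ring_nf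
    _ ≤ #s * ∑ i ∈ s, f i := by gcongr with i hi; exact h i hi

section Degree

variable {V : Type*}

lemma deg_nonneg (G : SimpleGraph V) (v : V) : 0 ≤ deg G v := Nat.cast_nonneg _

lemma deg_sup_le (G H : SimpleGraph V) (v : V) : deg (G ⊔ H) v ≤ deg G v + deg H v := by
  unfold deg
  exact_mod_cast Set.ncard_union_le _ _

lemma deg_eq_card_filter_adj [Fintype V] (G : SimpleGraph V) [DecidableRel G.Adj] (v : V) :
    deg G v = #{w | G.Adj v w} := by
  simp [deg, Set.ncard_eq_toFinset_card']

lemma mul_sq_le_deg_mul_deg_of_mem_Uset {R B P : SimpleGraph V} {η : ℝ} {v : V}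
    (hv : v ∈ Uset R B P η) : η / 4 * deg (R ⊔ B ⊔ P) v ^ 2 ≤ deg R v * deg B v := by
  have hsum : deg (R ⊔ B ⊔ P) v ≤ deg R v + deg B v + deg P v := by
    linarith [deg_sup_le (R ⊔ B) P v, deg_sup_le R B v]
  obtain ⟨hP, hB, hR⟩ : deg P v < deg (R ⊔ B ⊔ P) v / 2 ∧
      η * deg (R ⊔ B ⊔ P) v ≤ deg B v ∧ η * deg (R ⊔ B ⊔ P) v ≤ deg R v := hv
  have hd : 0 ≤ deg (R ⊔ B ⊔ P) v / 4 := by linarith [deg_nonneg P v]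
  rw [show η / 4 * deg (R ⊔ B ⊔ P) v ^ 2 = η * deg (R ⊔ B ⊔ P) v * (deg (R ⊔ B ⊔ P) v / 4) by
    ring]
  -- the red and blue degrees add up to more than `d(v)/2`, so one of them is at least `d(v)/4`
  rcases le_total (deg (R ⊔ B ⊔ P) v / 4) (deg B v) with h | h
  · exact mul_le_mul hR h hd (deg_nonneg R v)
  · rw [mul_comm (deg R v)]
    exact mul_le_mul hB (by linarith) hd (deg_nonneg B v)

lemma ne_of_adj_of_adj_of_disjoint {R B : SimpleGraph V} (hRB : Disjoint R.edgeSet B.edgeSet)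
    {x u y : V} (hxu : R.Adj x u) (huy : B.Adj u y) : x ≠ y := by
  rintro rfl
  exact hRB.ne_of_mem (R.mem_edgeSet.2 hxu.symm) (B.mem_edgeSet.2 huy) rfl

end Degree

section RedBluePaths

variable {V : Type*} [Fintype V] {R B : SimpleGraph V} [DecidableRel R.Adj] [DecidableRel B.Adj]
  (U : Set V) [DecidablePred (· ∈ U)]

lemma sum_sum_card_redBlue_paths :
    ∑ x, ∑ y, (#{u | u ∈ U ∧ R.Adj x u ∧ B.Adj u y} : ℝ) =
      ∑ u ∈ {u | u ∈ U}, deg R u * deg B u := by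
  have := sum_sum_card_filter_and_eq_sum_mul {u | u ∈ U} R.Adj B.Adj
  have hR : ∀ u, #{x | R.Adj x u} = #{x | R.Adj u x} := fun u => by simp_rw [R.adj_comm]
  simp only [hR, filter_filter] at this
  simp only [deg_eq_card_filter_adj]
  exact_mod_cast this

lemma ncard_redBlue_fourCycles (hRB : Disjoint R.edgeSet B.edgeSet) :
    ({q : V × V × V × V | q.2.1 ∈ U ∧ q.2.2.2 ∈ U ∧ q.2.1 ≠ q.2.2.2 ∧ q.1 ≠ q.2.2.1 ∧
        R.Adj q.1 q.2.1 ∧ R.Adj q.1 q.2.2.2 ∧ B.Adj q.2.1 q.2.2.1 ∧ B.Adj q.2.2.2 q.2.2.1}.ncard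
        : ℝ) =
      ∑ x, ∑ y, ((#{u | u ∈ U ∧ R.Adj x u ∧ B.Adj u y} : ℝ) ^ 2 -
        #{u | u ∈ U ∧ R.Adj x u ∧ B.Adj u y}) := by
  classical
  set C : V → V → V → Prop := fun x y u => u ∈ U ∧ R.Adj x u ∧ B.Adj u y
  calc _ = (#{q : V × V × V × V | C q.1 q.2.2.1 q.2.1 ∧ C q.1 q.2.2.1 q.2.2.2 ∧
        q.2.1 ≠ q.2.2.2} : ℝ) := by
        rw [Set.ncard_eq_toFinset_card', Set.toFinset_ofPred]
        congr 2
        refine filter_congr fun ⟨x, u, y, v⟩ _ => ?_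
        have := ne_of_adj_of_adj_of_disjoint hRB (x := x) (u := u) (y := y)
        simp only [C]
        tauto
    _ = ∑ x, ∑ y, (#({u | C x y u} : Finset V).offDiag : ℝ) := by
        exact_mod_cast card_filter_quadruples_eq_sum_card_offDiag C
    _ = _ := by
        refine sum_congr rfl fun x _ => sum_congr rfl fun y _ => ?_
        rw [offDiag_card, Nat.cast_sub (Nat.le_mul_self _), Nat.cast_mul, ← sq]

end RedBluePaths

lemma sq_mul_pow_three_le_mul_sq {c η N e : ℝ} (hc : 0 ≤ c) (hη : 0 < η) (hN : 0 ≤ N)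
    (h : c / √η * N ^ (3 / 2 : ℝ) ≤ e) : c ^ 2 * N ^ 3 ≤ η * e ^ 2 := by
  have hN3 : (N ^ (3 / 2 : ℝ)) ^ 2 = N ^ 3 := by
    rw [← Real.rpow_natCast, ← Real.rpow_mul hN]; norm_num
  have hsq : (c / √η * N ^ (3 / 2 : ℝ)) ^ 2 ≤ e ^ 2 := pow_le_pow_left₀ (by positivity) h 2
  rw [mul_pow, div_pow, Real.sq_sqrt hη.le, hN3] at hsq
  calc c ^ 2 * N ^ 3 = η * (c ^ 2 / η * N ^ 3) := by field_simp
    _ ≤ η * e ^ 2 := mul_le_mul_of_nonneg_left hsq hη.le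

lemma le_of_sq_le_sq_mul_add {η N e P Q : ℝ} (hN : 0 < N) (he : 400 * N ^ 3 ≤ η * e ^ 2)
    (hP : η / 4 * e ^ 2 ≤ N * P) (hPQ : P ^ 2 ≤ N ^ 2 * (Q + P)) :
    η ^ 2 / 100 * e ^ 4 / N ^ 4 ≤ Q := by
  have hA : 100 * N ^ 2 ≤ η * e ^ 2 / (4 * N) := by rw [le_div_iff₀ (by positivity)]; linarith
  have hAP : η * e ^ 2 / (4 * N) ≤ P := by rw [div_le_iff₀ (by positivity)]; linarith
  -- `N² P ≤ P²/100` because `P ≥ 100 N²`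
  have key : 99 / 100 * P ^ 2 ≤ N ^ 2 * Q := by nlinarith
  calc η ^ 2 / 100 * e ^ 4 / N ^ 4 = 16 / 100 * (η * e ^ 2 / (4 * N)) ^ 2 / N ^ 2 := by
        field_simp; ring
    _ ≤ 99 / 100 * P ^ 2 / N ^ 2 := by
        have : 0 ≤ η * e ^ 2 / (4 * N) := le_trans (by positivity) hA
        gcongr
        norm_num
    _ ≤ Q := by rw [div_le_iff₀ (by positivity)]; linarith

theorem stmt_19_general {V : Type*} [Fintype V] (R B P : SimpleGraph V) (η : ℝ)
    (hη0 : 0 < η)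
    (hRB : Disjoint R.edgeSet B.edgeSet)
    (heU : (20 / Real.sqrt η) * (Fintype.card V : ℝ) ^ ((3 : ℝ) / 2) ≤
      ∑ v : V, (Uset R B P η).indicator (deg (R ⊔ B ⊔ P)) v) :
    (η ^ 2 / 100) * (∑ v : V, (Uset R B P η).indicator (deg (R ⊔ B ⊔ P)) v) ^ 4 /
        (Fintype.card V : ℝ) ^ 4 ≤
      ({q : V × V × V × V | q.2.1 ∈ Uset R B P η ∧ q.2.2.2 ∈ Uset R B P η ∧
          q.2.1 ≠ q.2.2.2 ∧ q.1 ≠ q.2.2.1 ∧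
          R.Adj q.1 q.2.1 ∧ R.Adj q.1 q.2.2.2 ∧
          B.Adj q.2.1 q.2.2.1 ∧ B.Adj q.2.2.2 q.2.2.1}.ncard : ℝ) := by
  classical
  rcases isEmpty_or_nonempty V with _ | _
  · simp
  set U : Finset V := {v | v ∈ Uset R B P η}
  set m : V → V → ℝ := fun x y => #{u | u ∈ Uset R B P η ∧ R.Adj x u ∧ B.Adj u y}
  have he : ∑ v, (Uset R B P η).indicator (deg (R ⊔ B ⊔ P)) v = ∑ u ∈ U, deg (R ⊔ B ⊔ P) u := by
    rw [sum_filter]; rfl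
  have hpaths : η / 4 * (∑ u ∈ U, deg (R ⊔ B ⊔ P) u) ^ 2 ≤ Fintype.card V * ∑ x, ∑ y, m x y := by
    rw [sum_sum_card_redBlue_paths]
    refine (mul_sq_sum_le_card_mul_sum U (c := η / 4) (by positivity)
      fun u hu => mul_sq_le_deg_mul_deg_of_mem_Uset (by simpa [U] using hu)).trans ?_
    gcongr
    · exact sum_nonneg fun u _ => mul_nonneg (deg_nonneg R u) (deg_nonneg B u)
    · exact card_le_univ U
  have hCS := sq_sum_sum_le_card_mul_sum_sum_sq m
  rw [ncard_redBlue_fourCycles _ hRB, he]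
  rw [he] at heU
  refine le_of_sq_le_sq_mul_add (by positivity) ?_ hpaths ?_
  · convert sq_mul_pow_three_le_mul_sq (c := 20) (by norm_num) hη0 (by positivity) heU using 2
    norm_num
  · simpa [m, sum_sub_distrib, sq] using hCS

/-- If the edges of a bipartite graph on `n` vertices are colored red (`R`), blue (`B`)
and purple (`P`), `U` is as above and `e_U = Σ_{v ∈ U} d(v) ≥ (20/√η)·n^{3/2}`, then
there are at least `(η²/100)·e_U⁴/n⁴` four-cycles `x u y v` (counted as quadruples)
with `u, v ∈ U`, the edges `xu, xv` red and `uy, vy` blue. -/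
theorem stmt_19 {V : Type*} [Fintype V] (R B P : SimpleGraph V) (η : ℝ)
    (hη0 : 0 < η) (hη4 : η < 1 / 4)
    (hbip : (R ⊔ B ⊔ P).Colorable 2)
    (hRB : Disjoint R.edgeSet B.edgeSet)
    (hRP : Disjoint R.edgeSet P.edgeSet)
    (hBP : Disjoint B.edgeSet P.edgeSet)
    (heU : (20 / Real.sqrt η) * (Fintype.card V : ℝ) ^ ((3 : ℝ) / 2) ≤
      ∑ v : V, (Uset R B P η).indicator (deg (R ⊔ B ⊔ P)) v) :
    (η ^ 2 / 100) * (∑ v : V, (Uset R B P η).indicator (deg (R ⊔ B ⊔ P)) v) ^ 4 /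
        (Fintype.card V : ℝ) ^ 4 ≤
      ({q : V × V × V × V | q.2.1 ∈ Uset R B P η ∧ q.2.2.2 ∈ Uset R B P η ∧
          q.2.1 ≠ q.2.2.2 ∧ q.1 ≠ q.2.2.1 ∧
          R.Adj q.1 q.2.1 ∧ R.Adj q.1 q.2.2.2 ∧
          B.Adj q.2.1 q.2.2.1 ∧ B.Adj q.2.2.2 q.2.2.1}.ncard : ℝ) :=
  stmt_19_general R B P η hη0 hRB heU
end
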